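/- Given r ≥ 1 and any sequence (a_n) of non-negative reals with a_n → 0, there exists a Borel probability measure μ on ℝ with finite r-th moment such that for every n, the best n-point L^r-Kantorovich approximation error satisfies inf{d_r(ν, μ) : ν a probability measure supported on at most n points} ≥ a_n. -/

import Mathlib

open Set MeasureTheory Filter
open scoped ENNReal

/-- The distribution function of a measure on `ℝ`. -/
noncomputable def cdf (μ : Measure ℝ) (x : ℝ) : ℝ := (μ (Set.Iic x)).toReal

/-- The (upper) quantile function `F_μ⁻¹(t) = sup {x : F_μ(x) ≤ t}`. -/
noncomputable def quantile (μ : Measure ℝ) (t : ℝ) : ℝ := sSup {x : ℝ | cdf μ x ≤ t}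

/-- The `L^r`-Kantorovich distance, expressed via quantile functions. -/
noncomputable def drE (r : ℝ) (μ ν : Measure ℝ) : ℝ≥0∞ :=
  (∫⁻ t in Set.Ioo (0 : ℝ) 1, ENNReal.ofReal |quantile μ t - quantile ν t| ^ r) ^ (1 / r)

/-!
Let `μ` be purely atomic with atoms `xᵢ` spread out so fast that the balls `B(xᵢ, xᵢ/2)` are
pairwise disjoint. The quantile function of `μ` equals `xᵢ` on an interval of length `μ{xᵢ}`, and
that of `ν` takes values in `supp ν`; a point of `supp ν` lies in at most one ball, so if `ν` is
carried by `n` points, all but `n` atoms contribute `μ{xᵢ} (xᵢ/2)^r` to `d_r(ν, μ)^r`, while the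
`r`-th moment of `μ` is `2^r ∑ μ{xᵢ} (xᵢ/2)^r`.

The atoms come in blocks: block `k` has `2 N_k` atoms, each with `μ{xᵢ} (xᵢ/2)^r ≥ ε_k / N_k`.
Removing `n < N_k` of them leaves at least `ε_k`, so it suffices that every `n` has a block with
`n < N_k` and `a_n^r ≤ ε_k`, with `∑ ε_k < ∞`; geometric `ε_k` and `N_k` beyond the point where
`a^r` drops below `ε_k` do this.
-/

namespace QuantizationLowerBound

variable {μ ν : Measure ℝ}

theorem quantile_eq_of_lt_of_lt [IsFiniteMeasure μ] {x t : ℝ} (hlo : (μ (Iio x)).toReal < t)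
    (hhi : t < (μ (Iic x)).toReal) : quantile μ t = x := by
  have hS : {y | cdf μ y ≤ t} = Iio x := by
    ext y
    simp only [mem_ofPred_eq, mem_Iio, cdf]
    constructor
    · intro hy
      by_contra! hxy
      have := ENNReal.toReal_mono (measure_ne_top μ _) (measure_mono (Iic_subset_Iic.mpr hxy))
      linarith
    · intro hyx
      have := ENNReal.toReal_mono (measure_ne_top μ _) (measure_mono (Iic_subset_Iio.mpr hyx))
      linarith
  rw [quantile, hS, csSup_Iio]

theorem measure_Iic_le_of_measure_Ioc_eq_zero {a b : ℝ} (h : μ (Ioc a b) = 0) :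
    μ (Iic b) ≤ μ (Iic a) :=
  calc μ (Iic b) ≤ μ (Iic a ∪ Ioc a b) := measure_mono fun y hy => by
        rcases le_or_gt y a with hya | hya
        exacts [Or.inl hya, Or.inr ⟨hya, hy⟩]
    _ ≤ μ (Iic a) := by simpa [h] using measure_union_le (μ := μ) (Iic a) (Ioc a b)

theorem quantile_mem_of_measure_compl_eq_zero [IsProbabilityMeasure ν] {s : Finset ℝ}
    (hν : ν (↑s)ᶜ = 0) {t : ℝ} (ht0 : 0 ≤ t) (ht1 : t < 1) : quantile ν t ∈ s := by
  set S := {y | cdf ν y ≤ t}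
  obtain ⟨lo, hlo⟩ := s.bddBelow
  obtain ⟨hi, hhi⟩ := s.bddAbove
  have hSne : S.Nonempty := by
    refine ⟨lo - 1, ?_⟩
    have hsub : Iic (lo - 1) ⊆ (↑s)ᶜ := fun y (hy : y ≤ lo - 1) hys => by linarith [hlo hys]
    have : ν (Iic (lo - 1)) = 0 := measure_mono_null hsub hν
    simp [S, cdf, this, ht0]
  have hSbdd : BddAbove S := by
    refine ⟨hi, fun y hy => ?_⟩
    by_contra! hiy
    have hsy : (↑s : Set ℝ) ⊆ Iic y := fun z hz => (hhi hz).trans hiy.le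
    have h1 : ν (Iic y) = 1 := (prob_compl_eq_zero_iff measurableSet_Iic).mp
      (measure_mono_null (compl_subset_compl.mpr hsy) hν)
    have : cdf ν y = 1 := by simp [cdf, h1]
    linarith [show cdf ν y ≤ t from hy]
  have hq_def : quantile ν t = sSup S := rfl
  by_contra hq
  obtain ⟨ε, hε, hball⟩ := Metric.isOpen_iff.mp s.isClosed.isOpen_compl _ hq
  obtain ⟨y, hyS, hyq⟩ := exists_lt_of_lt_csSup hSne (sub_lt_self (quantile ν t) hε)
  have hgap : ν (Ioc y (quantile ν t + ε / 2)) = 0 := by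
    refine measure_mono_null (fun z hz => hball ?_) hν
    have := le_csSup hSbdd hyS
    rw [Metric.mem_ball, Real.dist_eq, abs_lt]
    constructor <;> linarith [hz.1, hz.2]
  have hmem : quantile ν t + ε / 2 ∈ S :=
    (ENNReal.toReal_mono (measure_ne_top ν _)
      (measure_Iic_le_of_measure_Ioc_eq_zero hgap)).trans hyS
  linarith [hq_def ▸ le_csSup hSbdd hmem]

/-- The levels `t` at which the quantile function of `μ` sits at the atom `x`. -/
noncomputable def atomLevels (μ : Measure ℝ) (x : ℝ) : Set ℝ :=
  Ioo (μ (Iio x)).toReal (μ (Iic x)).toReal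

theorem volume_atomLevels [IsFiniteMeasure μ] (x : ℝ) : volume (atomLevels μ x) = μ {x} := by
  rw [atomLevels, Real.volume_Ioo, ← ENNReal.toReal_sub_of_le (measure_mono Iio_subset_Iic_self)
    (measure_ne_top μ _), ENNReal.ofReal_toReal (by finiteness), ← measure_sdiff Iio_subset_Iic_self
    measurableSet_Iio.nullMeasurableSet (measure_ne_top μ _), Iic_sdiff_Iio_same]

theorem atomLevels_subset_Ioo [IsProbabilityMeasure μ] (x : ℝ) : atomLevels μ x ⊆ Ioo 0 1 :=
  fun _ ht => ⟨ENNReal.toReal_nonneg.trans_lt ht.1, ht.2.trans_le measureReal_le_one⟩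

theorem pairwiseDisjoint_atomLevels [IsFiniteMeasure μ] (T : Set ℝ) :
    T.PairwiseDisjoint (atomLevels μ) := by
  intro x hx y hy hxy
  wlog h : x < y generalizing x y
  · exact (this hy hx hxy.symm ((Ne.symm hxy).lt_of_le (not_lt.mp h))).symm
  have := ENNReal.toReal_mono (measure_ne_top μ _) (measure_mono (Iic_subset_Iio.mpr h))
  exact disjoint_left.mpr fun t ht ht' => by linarith [ht.2, ht'.1]

theorem sum_measure_singleton_mul_le_lintegral [IsProbabilityMeasure μ] [IsProbabilityMeasure ν]
    {r : ℝ} (hr : 0 ≤ r) {s : Finset ℝ} (hν : ν (↑s)ᶜ = 0) {T : Finset ℝ} {g : ℝ → ℝ}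
    (hg : ∀ x ∈ T, ∀ y ∈ s, g x ≤ |y - x|) :
    ∑ x ∈ T, μ {x} * ENNReal.ofReal (g x) ^ r ≤
      ∫⁻ t in Ioo 0 1, ENNReal.ofReal |quantile ν t - quantile μ t| ^ r := by
  set F := fun t => ENNReal.ofReal |quantile ν t - quantile μ t| ^ r
  have hlevel : ∀ x ∈ T, μ {x} * ENNReal.ofReal (g x) ^ r ≤ ∫⁻ t in atomLevels μ x, F t := by
    intro x hx
    rw [mul_comm, ← volume_atomLevels, ← setLIntegral_const]
    refine setLIntegral_mono' measurableSet_Ioo fun t ht => ?_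
    obtain ⟨ht0, ht1⟩ := atomLevels_subset_Ioo x ht
    have hνt := quantile_mem_of_measure_compl_eq_zero hν ht0.le ht1
    show _ ≤ ENNReal.ofReal |quantile ν t - quantile μ t| ^ r
    rw [quantile_eq_of_lt_of_lt ht.1 ht.2]
    exact ENNReal.rpow_le_rpow (ENNReal.ofReal_le_ofReal (hg x hx _ hνt)) hr
  calc ∑ x ∈ T, μ {x} * ENNReal.ofReal (g x) ^ r
      ≤ ∑ x ∈ T, ∫⁻ t in atomLevels μ x, F t := Finset.sum_le_sum hlevel
    _ = ∫⁻ t in ⋃ x ∈ T, atomLevels μ x, F t :=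
      (lintegral_biUnion_finset (pairwiseDisjoint_atomLevels _)
        (fun _ _ => measurableSet_Ioo) F).symm
    _ ≤ ∫⁻ t in Ioo 0 1, F t :=
      lintegral_mono_set (iUnion₂_subset fun x _ => atomLevels_subset_Ioo x)

open scoped Classical in
theorem card_filter_exists_mem_le {α β : Type*} {T : Finset α} {U : α → Set β}
    (hU : (T : Set α).PairwiseDisjoint U) (s : Finset β) :
    (T.filter fun x => ∃ y ∈ s, y ∈ U x).card ≤ s.card :=
  Finset.card_le_card_of_forall_subsingleton (fun x y => y ∈ U x)
    (fun _ hx => (Finset.mem_filter.mp hx).2)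
    (fun y _ _ hx _ hx' => hU.elim (Finset.mem_filter.mp hx.1).1 (Finset.mem_filter.mp hx'.1).1
      (not_disjoint_iff.mpr ⟨y, hx.2, hx'.2⟩))

open scoped Classical in
theorem card_sub_card_nsmul_le_lintegral [IsProbabilityMeasure μ] [IsProbabilityMeasure ν]
    {r : ℝ} (hr : 0 ≤ r) {s : Finset ℝ} (hν : ν (↑s)ᶜ = 0) {T : Finset ℝ} {g : ℝ → ℝ}
    (hT : (T : Set ℝ).PairwiseDisjoint fun x => Metric.ball x (g x)) {w : ℝ≥0∞}
    (hw : ∀ x ∈ T, w ≤ μ {x} * ENNReal.ofReal (g x) ^ r) :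
    (T.card - s.card) • w ≤ ∫⁻ t in Ioo 0 1, ENNReal.ofReal |quantile ν t - quantile μ t| ^ r := by
  have hsplit := Finset.card_filter_add_card_filter_not (s := T)
    (fun x => ∃ y ∈ s, y ∈ Metric.ball x (g x))
  have hnear := card_filter_exists_mem_le hT s
  set far := T.filter fun x => ¬∃ y ∈ s, y ∈ Metric.ball x (g x)
  have hcard : T.card - s.card ≤ far.card := by omega
  have hfar : ∀ x ∈ far, ∀ y ∈ s, g x ≤ |y - x| := by
    intro x hx y hy
    simp only [far, Finset.mem_filter, not_exists, not_and, Metric.mem_ball, Real.dist_eq,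
      not_lt] at hx
    exact hx.2 y hy
  calc (T.card - s.card) • w ≤ far.card • w := nsmul_le_nsmul_left bot_le hcard
    _ = ∑ x ∈ far, w := (Finset.sum_const w).symm
    _ ≤ ∑ x ∈ far, μ {x} * ENNReal.ofReal (g x) ^ r :=
      Finset.sum_le_sum fun x hx => hw x (Finset.mem_filter.mp hx).1
    _ ≤ _ := sum_measure_singleton_mul_le_lintegral hr hν hfar

theorem le_lintegral_quantile_of_block [IsProbabilityMeasure μ] [IsProbabilityMeasure ν]
    {r : ℝ} (hr : 0 ≤ r) {s : Finset ℝ} (hν : ν (↑s)ᶜ = 0) {m : ℕ} (hs : s.card < m)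
    {x : Fin (2 * m) → ℝ} (hx : Function.Injective x)
    (hsep : (range x).PairwiseDisjoint fun y => Metric.ball y (y / 2)) {ε : ℝ≥0∞}
    (hatom : ∀ i, ε / m ≤ μ {x i} * ENNReal.ofReal (x i / 2) ^ r) :
    ε ≤ ∫⁻ t in Ioo 0 1, ENNReal.ofReal |quantile ν t - quantile μ t| ^ r := by
  set T := Finset.univ.image x
  have hT : T.card = 2 * m := by
    rw [Finset.card_image_of_injective _ hx, Finset.card_univ, Fintype.card_fin]
  calc ε = m • (ε / m) := by
        rw [nsmul_eq_mul, ENNReal.mul_div_cancel (Nat.cast_ne_zero.mpr (by omega))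
          (ENNReal.natCast_ne_top m)]
    _ ≤ (T.card - s.card) • (ε / m) := nsmul_le_nsmul_left bot_le (by omega)
    _ ≤ _ := card_sub_card_nsmul_le_lintegral hr hν (by simpa [T] using hsep)
      (by simpa [T] using hatom)

theorem disjoint_ball_half_of_three_mul_le {y z : ℝ} (h : 3 * y ≤ z) :
    Disjoint (Metric.ball y (y / 2)) (Metric.ball z (z / 2)) := by
  rw [Real.ball_eq_Ioo, Real.ball_eq_Ioo]
  exact disjoint_left.mpr fun t ht ht' => by linarith [ht.2, ht'.1]

theorem pairwiseDisjoint_ball_half_range_geometric {ι : Type*} (e : ι → ℕ) {c : ℝ} (hc : 0 < c) :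
    (range fun i => c * 3 ^ e i).PairwiseDisjoint fun y => Metric.ball y (y / 2) := by
  have hsep : ∀ i j, e i < e j → 3 * (c * 3 ^ e i) ≤ c * 3 ^ e j := fun i j h => by
    rw [mul_left_comm, ← pow_succ']
    exact mul_le_mul_of_nonneg_left (pow_le_pow_right₀ (by norm_num) h) hc.le
  rintro _ ⟨i, rfl⟩ _ ⟨j, rfl⟩ hij
  rcases lt_trichotomy (e i) (e j) with h | h | h
  · exact disjoint_ball_half_of_three_mul_le (hsep i j h)
  · exact (hij (by simp only [h])).elim
  · exact (disjoint_ball_half_of_three_mul_le (hsep j i h)).symm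

section AtomicMeasure

variable {ι : Type*} (p : ι → ℝ≥0∞) (x : ι → ℝ)

noncomputable def atomicMeasure : Measure ℝ :=
  Measure.sum (fun i => p i • Measure.dirac (x i)) + (1 - ∑' i, p i) • Measure.dirac 0

theorem isProbabilityMeasure_atomicMeasure (hp : ∑' i, p i ≤ 1) :
    IsProbabilityMeasure (atomicMeasure p x) :=
  ⟨by simp [atomicMeasure, Measure.sum_apply _ MeasurableSet.univ, add_tsub_cancel_of_le hp]⟩

theorem le_atomicMeasure_singleton (i : ι) : p i ≤ atomicMeasure p x {x i} :=
  calc p i = (p i • Measure.dirac (x i)) {x i} := by simp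
    _ ≤ Measure.sum (fun i => p i • Measure.dirac (x i)) {x i} := Measure.le_sum _ i _
    _ ≤ atomicMeasure p x {x i} := Measure.le_add_right le_rfl _

theorem lintegral_atomicMeasure {f : ℝ → ℝ≥0∞} (hf : f 0 = 0) :
    ∫⁻ y, f y ∂atomicMeasure p x = ∑' i, p i * f (x i) := by
  simp only [atomicMeasure, lintegral_add_measure, lintegral_sum_measure, lintegral_smul_measure,
    lintegral_dirac, hf, smul_eq_mul, mul_zero, add_zero]

end AtomicMeasure

theorem exists_isProbabilityMeasure_atoms {ι : Type*} [Countable ι] {r : ℝ} (hr : 0 < r)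
    (v : ι → ℝ≥0∞) (hv : ∑' i, v i ≠ ∞) :
    ∃ μ : Measure ℝ, IsProbabilityMeasure μ ∧ ∫⁻ y, ENNReal.ofReal (|y| ^ r) ∂μ ≠ ∞ ∧
      ∃ x : ι → ℝ, Function.Injective x ∧
        (range x).PairwiseDisjoint (fun y => Metric.ball y (y / 2)) ∧
        ∀ i, v i ≤ μ {x i} * ENNReal.ofReal (x i / 2) ^ r := by
  obtain ⟨e, he⟩ := Countable.exists_injective_nat ι
  set V := ∑' i, v i
  -- the scale `c` makes every `(x i / 2) ^ r` at least `V`, so that the masses `p i` sum to `≤ 1`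
  set c : ℝ := ((V + 1) ^ r⁻¹).toReal
  have hc : 0 < c := ENNReal.toReal_pos (by positivity) (by finiteness)
  set x : ι → ℝ := fun i => 2 * c * 3 ^ e i
  set D : ι → ℝ≥0∞ := fun i => ENNReal.ofReal (x i / 2) ^ r
  have hx2 : ∀ i, x i / 2 = c * 3 ^ e i := fun i => by simp only [x]; ring
  have hD0 : ∀ i, D i ≠ 0 := fun i => by
    simp only [D, hx2]
    exact (ENNReal.rpow_pos (ENNReal.ofReal_pos.mpr (by positivity)) ENNReal.ofReal_ne_top).ne'
  have hDtop : ∀ i, D i ≠ ∞ := fun i => by simp only [D]; finiteness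
  have hVD : ∀ i, V ≤ D i := fun i => calc
    V ≤ ((V + 1) ^ r⁻¹) ^ r := by rw [ENNReal.rpow_inv_rpow hr.ne']; exact le_self_add
    _ = ENNReal.ofReal c ^ r := by rw [ENNReal.ofReal_toReal (by finiteness)]
    _ ≤ D i := by
      simp only [D, hx2]
      gcongr
      exact le_mul_of_one_le_right hc.le (one_le_pow₀ (by norm_num))
  set p : ι → ℝ≥0∞ := fun i => v i / D i
  have hp : ∑' i, p i ≤ 1 := calc
    ∑' i, p i ≤ ∑' i, v i * V⁻¹ := ENNReal.tsum_le_tsum fun i => ENNReal.div_le_div_left (hVD i) _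
    _ ≤ 1 := by rw [ENNReal.tsum_mul_right]; exact ENNReal.mul_inv_le_one V
  have hatom : ∀ i, p i * D i = v i := fun i => ENNReal.div_mul_cancel (hD0 i) (hDtop i)
  have hmoment : ∀ i, p i * ENNReal.ofReal (|x i| ^ r) = 2 ^ r * v i := fun i => by
    have hxi : |x i| = 2 * (x i / 2) := by rw [abs_of_pos (by positivity)]; ring
    rw [hxi, ← ENNReal.ofReal_rpow_of_nonneg (by positivity) hr.le, ENNReal.ofReal_mul zero_le_two,
      ENNReal.mul_rpow_of_nonneg _ _ hr.le, ENNReal.ofReal_ofNat, ← hatom]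
    exact mul_left_comm (p i) _ _
  refine ⟨atomicMeasure p x, isProbabilityMeasure_atomicMeasure p x hp, ?_, x,
    fun i j h => he ?_, pairwiseDisjoint_ball_half_range_geometric e (by positivity), fun i => ?_⟩
  · rw [lintegral_atomicMeasure p x (by simp [Real.zero_rpow hr.ne'])]
    simp only [hmoment, ENNReal.tsum_mul_left]
    finiteness
  · exact pow_right_injective₀ (by norm_num) (by norm_num) (mul_left_cancel₀ (by positivity) h)
  · rw [← hatom]
    gcongr
    exact le_atomicMeasure_singleton p x i

theorem exists_summable_block_majorant {b : ℕ → ℝ≥0∞} (hb : Tendsto b atTop (nhds 0))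
    {C : ℝ≥0∞} (hC : C ≠ ∞) (hbC : ∀ n, b n ≤ C) :
    ∃ (N : ℕ → ℕ) (ε : ℕ → ℝ≥0∞), ∑' k, ε k ≠ ∞ ∧ ∀ n, ∃ k, n < N k ∧ b n ≤ ε k := by
  set ε : ℕ → ℝ≥0∞ := fun k => (C + 1) * 2⁻¹ ^ k
  have hε : ∀ k, ∀ᶠ m in atTop, b m ≤ ε k := fun k =>
    hb.eventually (eventually_le_nhds (by simp [ε, ENNReal.pow_pos]))
  choose M hM using fun k => eventually_atTop.mp (hε k)
  refine ⟨fun k => M (k + 1) + (k + 1), ε, ?_, fun n => ?_⟩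
  · simp only [ε, ENNReal.tsum_mul_left, ENNReal.tsum_geometric, ENNReal.one_sub_inv_two,
      inv_inv]
    finiteness
  · have hex : ∃ k, n < M (k + 1) + (k + 1) := ⟨n, by omega⟩
    refine ⟨Nat.find hex, Nat.find_spec hex, ?_⟩
    rcases h : Nat.find hex with _ | k
    · simpa [ε] using (hbC n).trans le_self_add
    · have hmin := Nat.find_min hex (by omega : k < Nat.find hex)
      exact hM (k + 1) n (by omega)

theorem tsum_sigma_div_ne_top {N : ℕ → ℕ} {ε : ℕ → ℝ≥0∞} (hε : ∑' k, ε k ≠ ∞) :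
    ∑' i : Σ k, Fin (2 * N k), ε i.1 / N i.1 ≠ ∞ := by
  refine ne_top_of_le_ne_top (b := ∑' k, 2 * ε k) (by rw [ENNReal.tsum_mul_left]; finiteness) ?_
  rw [ENNReal.tsum_sigma']
  refine ENNReal.tsum_le_tsum fun k => ?_
  simp only [tsum_fintype, Finset.sum_const, Finset.card_univ, Fintype.card_fin, nsmul_eq_mul,
    Nat.cast_mul, Nat.cast_ofNat, mul_assoc]
  gcongr
  exact ENNReal.mul_div_le

end QuantizationLowerBound

open QuantizationLowerBound in
theorem stmt19_general (r : ℝ) (hr : 1 ≤ r) (a : ℕ → ℝ)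
    (hlim : Tendsto a atTop (nhds 0)) :
    ∃ μ : Measure ℝ, IsProbabilityMeasure μ ∧
      (∫⁻ x : ℝ, ENNReal.ofReal (|x| ^ r) ∂μ) ≠ ⊤ ∧
      ∀ n : ℕ, ∀ ν : Measure ℝ, IsProbabilityMeasure ν →
        (∃ s : Finset ℝ, s.card ≤ n ∧ ν ((↑s : Set ℝ)ᶜ) = 0) →
        ENNReal.ofReal (a n) ≤ drE r ν μ := by
  have hr0 : 0 < r := by linarith
  obtain ⟨B, hB⟩ := hlim.bddAbove_range
  have hb : Tendsto (fun n => ENNReal.ofReal (a n) ^ r) atTop (nhds 0) := by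
    have h := ((ENNReal.continuous_rpow_const (y := r)).tendsto _).comp
      (ENNReal.tendsto_ofReal hlim)
    rwa [ENNReal.ofReal_zero, ENNReal.zero_rpow_of_pos hr0] at h
  obtain ⟨N, ε, hε, hbε⟩ := exists_summable_block_majorant hb (C := ENNReal.ofReal B ^ r)
    (by finiteness) fun n => by gcongr; exact hB ⟨n, rfl⟩
  obtain ⟨μ, hμ, hmom, x, hx, hsep, hatom⟩ :=
    exists_isProbabilityMeasure_atoms hr0 _ (tsum_sigma_div_ne_top (N := N) hε)
  refine ⟨μ, hμ, hmom, fun n ν hν ⟨s, hsn, hνs⟩ => ?_⟩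
  obtain ⟨k, hnk, hbk⟩ := hbε n
  rw [drE, one_div, ENNReal.le_rpow_inv_iff hr0]
  exact hbk.trans <| le_lintegral_quantile_of_block hr0.le hνs (hsn.trans_lt hnk)
    (hx.comp sigma_mk_injective) (hsep.subset (range_comp_subset_range _ x))
    fun i => hatom ⟨k, i⟩

theorem stmt19 (r : ℝ) (hr : 1 ≤ r) (a : ℕ → ℝ) (ha : ∀ n, 0 ≤ a n)
    (hlim : Tendsto a atTop (nhds 0)) :
    ∃ μ : Measure ℝ, IsProbabilityMeasure μ ∧
      (∫⁻ x : ℝ, ENNReal.ofReal (|x| ^ r) ∂μ) ≠ ⊤ ∧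
      ∀ n : ℕ, ∀ ν : Measure ℝ, IsProbabilityMeasure ν →
        (∃ s : Finset ℝ, s.card ≤ n ∧ ν ((↑s : Set ℝ)ᶜ) = 0) →
        ENNReal.ofReal (a n) ≤ drE r ν μ :=
  stmt19_general r hr a hlim
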